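/- arXiv:2402.08792 — 3 statements merged into one kernel-verified Lean document; each statement's English description precedes it below -/
import Mathlib

section
/- (Theorem 1.) Let P be symmetric and let η₁ ∈ [0,1]. There exists a Borel measurable function f₁ : ℝ → ℝ with f₁ ≥ 0, ∫_ℝ f₁(y) dy = 1, and (1 − η₁) φ(y) + η₁ f₁(y) = m(y) for every y ∈ ℝ, if and only if ρ₁ ≤ η₁ ≤ 1. That is, the set H of mixture weights admitting a two-groups decomposition of the marginal density equals the closed interval [ρ₁, 1]. -/
open MeasureTheory Real

/-- The standard normal density. -/
noncomputable def phi (t : ℝ) : ℝ := (Real.sqrt (2 * Real.pi))⁻¹ * Real.exp (-(t ^ 2) / 2)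

/-- The marginal density of `Y` in the signal-plus-noise model. -/
noncomputable def marginal (P : Measure ℝ) (y : ℝ) : ℝ := ∫ x, phi (y - x) ∂P

/-- The sparsity rate `ρ₁ = ∫ (1 - e^{-x²/2}) dP(x)`. -/
noncomputable def sparsityRate (P : Measure ℝ) : ℝ := ∫ x, (1 - Real.exp (-(x ^ 2) / 2)) ∂P

lemma phi_pos (t : ℝ) : 0 < phi t := by
  unfold phi
  positivity

lemma phi_cont : Continuous phi := by
  unfold phi
  fun_prop

lemma phi_sub_eq (y x : ℝ) : phi (y - x) = phi y * Real.exp (x * y - x ^ 2 / 2) := by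
  unfold phi
  rw [mul_assoc, ← Real.exp_add]
  ring_nf

lemma integrable_phi : Integrable phi := by
  have h : Integrable (fun t : ℝ => Real.exp (-(1/2 : ℝ) * t ^ 2)) :=
    integrable_exp_neg_mul_sq (by norm_num)
  have : phi = fun t => (Real.sqrt (2 * Real.pi))⁻¹ * Real.exp (-(1/2 : ℝ) * t ^ 2) := by
    funext t; unfold phi; ring_nf
  rw [this]
  exact h.const_mul _

lemma integral_phi : ∫ y : ℝ, phi y = 1 := by
  have h : ∫ y : ℝ, Real.exp (-(1/2 : ℝ) * y ^ 2) = Real.sqrt (Real.pi / (1/2)) :=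
    integral_gaussian (1/2)
  have heq : ∫ y : ℝ, phi y = (Real.sqrt (2 * Real.pi))⁻¹ * ∫ y : ℝ, Real.exp (-(1/2 : ℝ) * y ^ 2) := by
    rw [← integral_const_mul]
    congr 1; funext y; unfold phi; ring_nf
  rw [heq, h]
  have h2 : Real.pi / (1/2) = 2 * Real.pi := by ring
  rw [h2]
  have : Real.sqrt (2 * Real.pi) ≠ 0 := by positivity
  field_simp

lemma integrable_expker (P : Measure ℝ) [IsProbabilityMeasure P] (y : ℝ) :
    Integrable (fun x => Real.exp (x * y - x ^ 2 / 2)) P := by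
  apply Integrable.mono' (integrable_const (Real.exp (y ^ 2 / 2)))
  · exact (Real.measurable_exp.comp (by fun_prop)).aestronglyMeasurable
  · filter_upwards with x
    rw [Real.norm_eq_abs, abs_of_nonneg (Real.exp_nonneg _)]
    apply Real.exp_le_exp.mpr
    nlinarith [sq_nonneg (x - y)]

lemma integrable_expsq (P : Measure ℝ) [IsProbabilityMeasure P] :
    Integrable (fun x => Real.exp (-(x ^ 2) / 2)) P := by
  apply Integrable.mono' (integrable_const 1)
  · exact (Real.measurable_exp.comp (by fun_prop)).aestronglyMeasurable
  · filter_upwards with x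
    rw [Real.norm_eq_abs, abs_of_nonneg (Real.exp_nonneg _)]
    rw [← Real.exp_zero]
    apply Real.exp_le_exp.mpr
    nlinarith [sq_nonneg x]

lemma marginal_eq (P : Measure ℝ) [IsProbabilityMeasure P] (y : ℝ) :
    marginal P y = phi y * ∫ x, Real.exp (x * y - x ^ 2 / 2) ∂P := by
  unfold marginal
  rw [← integral_const_mul]
  congr 1; funext x; exact phi_sub_eq y x

lemma sparsity_eq (P : Measure ℝ) [IsProbabilityMeasure P] :
    sparsityRate P = 1 - ∫ x, Real.exp (-(x ^ 2) / 2) ∂P := by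
  unfold sparsityRate
  rw [integral_sub (integrable_const 1) (integrable_expsq P)]
  simp

lemma key_ineq (P : Measure ℝ) [IsProbabilityMeasure P]
    (hsymm : Measure.map (fun x : ℝ => -x) P = P) (y : ℝ) :
    ∫ x, Real.exp (-(x ^ 2) / 2) ∂P ≤ ∫ x, Real.exp (x * y - x ^ 2 / 2) ∂P := by
  have hmap : ∫ x, Real.exp (x * y - x ^ 2 / 2) ∂P
      = ∫ x, Real.exp ((-x) * y - (-x) ^ 2 / 2) ∂P := by
    conv_lhs => rw [← hsymm]
    rw [integral_map measurable_neg.aemeasurable]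
    exact (Real.measurable_exp.comp (by fun_prop)).aestronglyMeasurable
  have hint1 := integrable_expker P y
  have hint2 : Integrable (fun x => Real.exp ((-x) * y - (-x) ^ 2 / 2)) P := by
    have := integrable_expker P (-y)
    apply this.congr
    filter_upwards with x
    congr 1; ring
  have h2 : 2 * ∫ x, Real.exp (x * y - x ^ 2 / 2) ∂P
      = ∫ x, (Real.exp (x * y - x ^ 2 / 2) + Real.exp ((-x) * y - (-x) ^ 2 / 2)) ∂P := by
    rw [integral_add hint1 hint2, ← hmap]; ring
  have h3 : ∫ x, (2 : ℝ) * Real.exp (-(x ^ 2) / 2) ∂P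
      ≤ ∫ x, (Real.exp (x * y - x ^ 2 / 2) + Real.exp ((-x) * y - (-x) ^ 2 / 2)) ∂P := by
    apply integral_mono ((integrable_expsq P).const_mul 2) (hint1.add hint2)
    intro x
    have e1 : Real.exp (x * y - x ^ 2 / 2) = Real.exp (x * y) * Real.exp (-(x ^ 2) / 2) := by
      rw [← Real.exp_add]; ring_nf
    have e2 : Real.exp ((-x) * y - (-x) ^ 2 / 2) = Real.exp (-(x * y)) * Real.exp (-(x ^ 2) / 2) := by
      rw [← Real.exp_add]; ring_nf
    simp only [e1, e2]
    simp only [Pi.add_apply]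
    have htu : Real.exp (x * y) * Real.exp (-(x * y)) = 1 := by
      rw [← Real.exp_add]; simp
    have hc : 2 ≤ Real.exp (x * y) + Real.exp (-(x * y)) := by
      nlinarith [mul_nonneg (Real.exp_pos (-(x * y))).le (sq_nonneg (Real.exp (x * y) - 1)),
        Real.exp_pos (x * y), Real.exp_pos (-(x * y))]
    nlinarith [Real.exp_pos (-(x ^ 2) / 2)]
  rw [integral_const_mul] at h3
  linarith

lemma integrable_prod_phi (P : Measure ℝ) [IsProbabilityMeasure P] :
    Integrable (Function.uncurry fun x y => phi (y - x)) (P.prod volume) := by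
  rw [integrable_prod_iff]
  · constructor
    · filter_upwards with x
      exact integrable_phi.comp_sub_right x
    · apply Integrable.mono' (integrable_const 1)
      · apply StronglyMeasurable.aestronglyMeasurable
        apply StronglyMeasurable.integral_prod_right (f := fun x y => ‖phi (y - x)‖)
        exact ((phi_cont.comp (continuous_snd.sub continuous_fst)).norm).stronglyMeasurable
      · filter_upwards with x
        simp only [Function.uncurry]
        rw [Real.norm_eq_abs, abs_of_nonneg (integral_nonneg fun y => norm_nonneg _)]
        have : ∫ y : ℝ, ‖phi (y - x)‖ = ∫ y : ℝ, phi (y - x) := by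
          congr 1; funext y; exact Real.norm_of_nonneg (phi_pos _).le
        rw [this, integral_sub_right_eq_self phi x, integral_phi]
  · apply Continuous.aestronglyMeasurable
    have : (Function.uncurry fun x y => phi (y - x)) = fun p : ℝ × ℝ => phi (p.2 - p.1) := rfl
    rw [this]
    exact phi_cont.comp (continuous_snd.sub continuous_fst)

lemma integrable_marginal (P : Measure ℝ) [IsProbabilityMeasure P] :
    Integrable (marginal P) := by
  have h := (integrable_prod_phi P).swap
  have := h.integral_prod_left
  apply this.congr
  filter_upwards with y
  rfl

lemma integral_marginal (P : Measure ℝ) [IsProbabilityMeasure P] :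
    ∫ y, marginal P y = 1 := by
  have h := integral_integral_swap (f := fun x y => phi (y - x)) (μ := P) (ν := volume)
    (integrable_prod_phi P)
  unfold marginal
  rw [← h]
  have : ∀ x : ℝ, ∫ y : ℝ, phi (y - x) = 1 := fun x => by
    rw [integral_sub_right_eq_self phi x, integral_phi]
  simp_rw [this]
  simp

lemma measurable_marginal (P : Measure ℝ) [IsProbabilityMeasure P] :
    Measurable (marginal P) := by
  have : StronglyMeasurable (fun y => ∫ x, phi (y - x) ∂P) := by
    apply StronglyMeasurable.integral_prod_right (f := fun y x => phi (y - x))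
    exact (phi_cont.comp (continuous_fst.sub continuous_snd)).stronglyMeasurable
  exact this.measurable

/-- Theorem 1: For symmetric `P` and `η₁ ∈ [0,1]`, there is a two-groups
decomposition `m = (1 - η₁) φ + η₁ f₁` with `f₁` a probability density if and only if
`η₁ ∈ [ρ₁, 1]`. -/
theorem stmt3 (P : Measure ℝ) [IsProbabilityMeasure P]
    (hsymm : Measure.map (fun x : ℝ => -x) P = P)
    (η₁ : ℝ) (hη : η₁ ∈ Set.Icc (0 : ℝ) 1) :
    (∃ f₁ : ℝ → ℝ, Measurable f₁ ∧ (∀ y, 0 ≤ f₁ y) ∧ (∫ y : ℝ, f₁ y) = 1 ∧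
      ∀ y, (1 - η₁) * phi y + η₁ * f₁ y = marginal P y) ↔
    η₁ ∈ Set.Icc (sparsityRate P) 1 := by
  obtain ⟨hη0, hη1⟩ := hη
  constructor
  · rintro ⟨f₁, hmeas, hnn, hint, heq⟩
    refine ⟨?_, hη1⟩
    -- evaluate at y = 0
    have h0 := heq 0
    have hm0 : marginal P 0 = phi 0 * ∫ x, Real.exp (-(x ^ 2) / 2) ∂P := by
      rw [marginal_eq P 0]
      congr 1
      apply integral_congr_ae
      filter_upwards with x
      ring_nf
    rw [hm0] at h0
    have hphi0 : 0 < phi 0 := phi_pos 0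
    have hf0 : 0 ≤ η₁ * f₁ 0 := mul_nonneg hη0 (hnn 0)
    rw [sparsity_eq]
    nlinarith
  · rintro ⟨hρ, -⟩
    rw [sparsity_eq] at hρ
    by_cases hz : η₁ = 0
    · -- then ∫ exp(-x²/2) dP = 1, so P is concentrated at 0 and marginal = phi
      subst hz
      have hone : ∫ x, Real.exp (-(x ^ 2) / 2) ∂P = 1 := by
        have hle : ∫ x, Real.exp (-(x ^ 2) / 2) ∂P ≤ 1 := by
          calc ∫ x, Real.exp (-(x ^ 2) / 2) ∂P ≤ ∫ _x, (1 : ℝ) ∂P := by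
                apply integral_mono (integrable_expsq P) (integrable_const 1)
                intro x
                rw [← Real.exp_zero]
                apply Real.exp_le_exp.mpr
                nlinarith [sq_nonneg x]
            _ = 1 := by simp
        linarith
      have hae : ∀ᵐ x ∂P, Real.exp (-(x ^ 2) / 2) = 1 := by
        have hnn' : 0 ≤ᵐ[P] fun x => 1 - Real.exp (-(x ^ 2) / 2) := by
          filter_upwards with x
          simp only [Pi.zero_apply, sub_nonneg]
          rw [← Real.exp_zero]
          apply Real.exp_le_exp.mpr
          nlinarith [sq_nonneg x]
        have hint0 : ∫ x, (1 - Real.exp (-(x ^ 2) / 2)) ∂P = 0 := by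
          rw [integral_sub (integrable_const 1) (integrable_expsq P), hone]; simp
        have := (integral_eq_zero_iff_of_nonneg_ae hnn'
          ((integrable_const 1).sub (integrable_expsq P))).mp hint0
        filter_upwards [this] with x hx
        have : 1 - Real.exp (-(x ^ 2) / 2) = 0 := hx
        linarith
      have hae0 : ∀ᵐ x ∂P, x = 0 := by
        filter_upwards [hae] with x hx
        have : -(x ^ 2) / 2 = 0 := Real.exp_injective (hx.trans Real.exp_zero.symm)
        nlinarith
      refine ⟨phi, phi_cont.measurable, fun y => (phi_pos y).le, integral_phi, fun y => ?_⟩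
      have : marginal P y = phi y := by
        unfold marginal
        have : ∫ x, phi (y - x) ∂P = ∫ _x, phi y ∂P := by
          apply integral_congr_ae
          filter_upwards [hae0] with x hx
          rw [hx, sub_zero]
        rw [this]; simp
      rw [this]; ring
    · have hηpos : 0 < η₁ := lt_of_le_of_ne hη0 (Ne.symm hz)
      -- key nonnegativity: marginal P y ≥ (1 - η₁) * phi y
      have hkey : ∀ y, (1 - η₁) * phi y ≤ marginal P y := by
        intro y
        rw [marginal_eq P y]
        have h1 := key_ineq P hsymm y
        have h2 : 1 - η₁ ≤ ∫ x, Real.exp (-(x ^ 2) / 2) ∂P := by linarith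
        have := (phi_pos y).le
        nlinarith
      refine ⟨fun y => (marginal P y - (1 - η₁) * phi y) / η₁, ?_, ?_, ?_, ?_⟩
      · exact ((measurable_marginal P).sub (phi_cont.measurable.const_mul _)).div_const _
      · intro y
        apply div_nonneg _ hηpos.le
        linarith [hkey y]
      · have : ∫ y : ℝ, (marginal P y - (1 - η₁) * phi y) / η₁
            = (∫ y : ℝ, (marginal P y - (1 - η₁) * phi y)) / η₁ := integral_div _ _
        rw [this, integral_sub (integrable_marginal P) (integrable_phi.const_mul _),
          integral_marginal, integral_const_mul, integral_phi]
        field_simp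
        ring
      · intro y
        field_simp
        ring
end

section
/- Let P be a Borel probability measure on ℝ satisfying the compatibility condition ∫ x e^{−x²/2} dP(x) = 0. Then for every y ∈ ℝ, ∫ e^{x·y − x²/2} dP(x) ≥ ∫ e^{−x²/2} dP(x). Consequently, writing ρ₀ = ∫ e^{−x²/2} dP(x) > 0 and the weighted hyperbolic secant sech_w(y) = ρ₀ / ∫ e^{x·y − x²/2} dP(x), one has sech_w(y) ∈ (0, 1] for every y, so sech_w(y) is a valid conditional probability. -/
/-!
Since `e^{xy} ≥ 1 + xy`, integrating `e^{xy} e^{-x²/2}` against `P` gives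
`∫ e^{xy - x²/2} dP ≥ ∫ e^{-x²/2} dP + y ∫ x e^{-x²/2} dP`, and the compatibility condition kills
the linear term. Positivity of `ρ₀` is that of an exponential integral over a nonzero measure.
-/

open MeasureTheory Real

section FiniteMeasure

variable (μ : Measure ℝ) [IsFiniteMeasure μ]

lemma integrable_exp_mul_sub_sq_div_two (y : ℝ) :
    Integrable (fun x : ℝ => exp (x * y - x ^ 2 / 2)) μ := by
  refine .of_bound (by fun_prop) (exp (y ^ 2 / 2)) (ae_of_all _ fun x => ?_)
  rw [norm_of_nonneg (exp_pos _).le, exp_le_exp]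
  nlinarith [sq_nonneg (x - y)]

lemma integrable_exp_neg_sq_div_two :
    Integrable (fun x : ℝ => exp (-(x ^ 2) / 2)) μ :=
  (integrable_exp_mul_sub_sq_div_two μ 0).congr (ae_of_all _ fun x => by ring_nf)

lemma integrable_mul_exp_neg_sq_div_two :
    Integrable (fun x : ℝ => x * exp (-(x ^ 2) / 2)) μ := by
  refine .of_bound (by fun_prop) 1 (ae_of_all _ fun x => ?_)
  have habs : |x| ≤ exp (x ^ 2 / 2) := by
    nlinarith [add_one_le_exp (x ^ 2 / 2), sq_nonneg (|x| - 1), sq_abs x]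
  calc ‖x * exp (-(x ^ 2) / 2)‖ = |x| * exp (-(x ^ 2) / 2) := by
        rw [norm_mul, norm_of_nonneg (exp_pos _).le, norm_eq_abs]
    _ ≤ exp (x ^ 2 / 2) * exp (-(x ^ 2) / 2) := by gcongr
    _ = 1 := by rw [← exp_add, ← exp_zero]; ring_nf

lemma integral_exp_neg_sq_div_two_add_le (y : ℝ) :
    (∫ x, exp (-(x ^ 2) / 2) ∂μ) + y * ∫ x, x * exp (-(x ^ 2) / 2) ∂μ
      ≤ ∫ x, exp (x * y - x ^ 2 / 2) ∂μ := by
  have hgauss := integrable_exp_neg_sq_div_two μ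
  have hlin := (integrable_mul_exp_neg_sq_div_two μ).const_mul y
  rw [← integral_const_mul, ← integral_add hgauss hlin]
  refine integral_mono (hgauss.add hlin) (integrable_exp_mul_sub_sq_div_two μ y) fun x => ?_
  calc exp (-(x ^ 2) / 2) + y * (x * exp (-(x ^ 2) / 2))
      = (x * y + 1) * exp (-(x ^ 2) / 2) := by ring
    _ ≤ exp (x * y) * exp (-(x ^ 2) / 2) := by gcongr; exact add_one_le_exp _
    _ = exp (x * y - x ^ 2 / 2) := by rw [← exp_add]; ring_nf

end FiniteMeasure

/-- if `P` satisfies the compatibility condition `∫ x e^{-x²/2} dP(x) = 0`,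
then `∫ e^{x y - x²/2} dP(x) ≥ ρ₀ := ∫ e^{-x²/2} dP(x)` for every `y`, `ρ₀ > 0`, and the
weighted hyperbolic secant `sech_w(y) = ρ₀ / ∫ e^{x y - x²/2} dP(x)` lies in `(0, 1]`. -/
theorem stmt14 (P : Measure ℝ) [IsProbabilityMeasure P]
    (hcompat : (∫ x, x * Real.exp (-(x ^ 2) / 2) ∂P) = 0)
    (ρ₀ : ℝ) (hρ₀ : ρ₀ = ∫ x, Real.exp (-(x ^ 2) / 2) ∂P)
    (sechW : ℝ → ℝ) (hsechW : ∀ y, sechW y = ρ₀ / ∫ x, Real.exp (x * y - x ^ 2 / 2) ∂P) :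
    (∀ y : ℝ, ρ₀ ≤ ∫ x, Real.exp (x * y - x ^ 2 / 2) ∂P) ∧
    0 < ρ₀ ∧
    (∀ y : ℝ, sechW y ∈ Set.Ioc (0 : ℝ) 1) := by
  have hle (y : ℝ) : ρ₀ ≤ ∫ x, exp (x * y - x ^ 2 / 2) ∂P := by
    simpa [hρ₀, hcompat] using integral_exp_neg_sq_div_two_add_le P y
  have hpos : 0 < ρ₀ := hρ₀ ▸ integral_exp_pos (integrable_exp_neg_sq_div_two P)
  refine ⟨hle, hpos, fun y => ?_⟩
  have hden := hpos.trans_le (hle y)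
  rw [hsechW y]
  exact ⟨div_pos hpos hden, (div_le_one hden).mpr (hle y)⟩
end

section
/- (Theorem 2, sparse-limit threshold.) Let (P_ν)_{ν>0} be a family of symmetric Borel probability measures on ℝ with rates ρ(ν) = ∫ (1 − e^{−x²/2}) dP_ν(x) > 0 satisfying ρ(ν) → 0 as ν → 0⁺, and let H be a Borel measure on ℝ with ∫ (1 − e^{−x²/2}) dH(x) = 1 such that for every bounded continuous w : ℝ → ℝ with x ↦ w(x)/x² bounded on ℝ∖{0}, one has lim_{ν→0⁺} ρ(ν)^{−1} ∫ w dP_ν = ∫ w dH, with ∫ w dH finite (i.e., P_ν has a sparse limit with exceedance measure H). Fix γ > 0 and ω > 0, and let ν ↦ y(ν) ∈ ℝ be such that ∫ (cosh(x · y(ν)) − 1) e^{−x²/2} dP_ν(x) = ω for all sufficiently small ν > 0 and ρ(ν) · y(ν)² → 0 as ν → 0⁺. Then lim_{ν→0⁺} [ ∫_{{x : |x| < γ/|y(ν)|}} φ(y(ν) − x) dP_ν(x) ] / [ (1 − ρ(ν)) φ(y(ν)) ] = 1; that is, the conditional probability P_ν(|X| < γ/|y| | Y = y) is asymptotically equivalent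 to the complementary local activity rate clar(y) = (1 − ρ(ν))φ(y)/m_ν(y). -/
open MeasureTheory Real Filter

lemma aux1 (s : ℝ) : s * Real.exp (-s) ≤ 1 - Real.exp (-s) := by
  have h := Real.add_one_le_exp s
  have h2 := Real.exp_pos (-s)
  have h3 : Real.exp s * Real.exp (-s) = 1 := by rw [← Real.exp_add]; simp
  nlinarith

lemma aux2 (t : ℝ) : Real.cosh t ≤ Real.exp |t| := by
  rw [← Real.cosh_abs, Real.cosh_eq]
  have h1 : Real.exp (-|t|) ≤ Real.exp |t| := Real.exp_le_exp.2 (by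
    have := abs_nonneg t; linarith)
  linarith

lemma aux3 (t : ℝ) : Real.cosh t - 1 ≤ t ^ 2 / 2 * Real.exp |t| := by
  rw [← Real.cosh_abs]
  set u := |t| with hu
  have hu0 : 0 ≤ u := abs_nonneg t
  have ht2 : t ^ 2 = u ^ 2 := (sq_abs t).symm
  rw [ht2]
  set a := Real.exp (u / 2) with ha
  set b := Real.exp (-(u / 2)) with hb
  have hab : a * b = 1 := by rw [ha, hb, ← Real.exp_add]; simp
  have hba : b ≤ a := Real.exp_le_exp.2 (by linarith)
  have hbpos : 0 < b := Real.exp_pos _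
  have hapos : 0 < a := Real.exp_pos _
  have ha2 : a ^ 2 = Real.exp u := by
    rw [ha, sq, ← Real.exp_add]; ring_nf
  have hb2 : b ^ 2 = Real.exp (-u) := by
    rw [hb, sq, ← Real.exp_add]; ring_nf
  have hcosh : Real.cosh u = (a ^ 2 + b ^ 2) / 2 := by
    rw [Real.cosh_eq, ha2, hb2]
  have key : a - b ≤ u * a := by
    have h := Real.add_one_le_exp (-u)
    have h2 : Real.exp (-u) * Real.exp u = 1 := by rw [← Real.exp_add]; simp
    have h3 : a ^ 2 - 1 ≤ u * a ^ 2 := by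
      rw [ha2]; nlinarith [Real.exp_pos u]
    nlinarith
  have heu : Real.exp u = a ^ 2 := ha2.symm
  rw [hcosh, heu]
  nlinarith

lemma auxe : Real.exp (1/2 : ℝ) ≤ 2 := by
  nlinarith [Real.exp_one_lt_d9, sq_nonneg (Real.exp (1/2:ℝ)),
    Real.exp_pos (1/2:ℝ),
    (by rw [sq, ← Real.exp_add]; norm_num : Real.exp (1/2:ℝ) ^ 2 = Real.exp 1)]

lemma auxe' : (1/2 : ℝ) ≤ Real.exp (-(1/2) : ℝ) := by
  have h : Real.exp (1/2:ℝ) * Real.exp (-(1/2):ℝ) = 1 := by rw [← Real.exp_add]; norm_num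
  nlinarith [auxe, Real.exp_pos (-(1/2):ℝ)]

lemma auxe3 : Real.exp 1 ≤ 3 := by nlinarith [Real.exp_one_lt_d9]

/-- global pointwise bound used to show `y ν → ∞`. -/
lemma aux4 (x v : ℝ) :
    (Real.cosh (x * v) - 1) * Real.exp (-(x ^ 2) / 2) ≤
      6 * Real.exp (v ^ 2) * (1 - Real.exp (-(x ^ 2) / 2)) := by
  have hxv : |x * v| ≤ x ^ 2 / 2 + v ^ 2 / 2 := by
    rw [abs_mul]
    nlinarith [sq_nonneg (|x| - |v|), sq_abs x, sq_abs v, abs_nonneg x, abs_nonneg v]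
  have hc1 := Real.one_le_cosh (x * v)
  have hep := Real.exp_pos (-(x ^ 2) / 2)
  have hev := Real.exp_pos (v ^ 2)
  have hev2 := Real.exp_pos (v ^ 2 / 2)
  have hvv : Real.exp (v ^ 2 / 2) * Real.exp (v ^ 2 / 2) = Real.exp (v ^ 2) := by
    rw [← Real.exp_add]; ring_nf
  have hd : Real.exp (-(1/2):ℝ) ≤ 2/3 := by
    have h6 : Real.exp (1/2:ℝ) * Real.exp (-(1/2):ℝ) = 1 := by
      rw [← Real.exp_add]; norm_num
    nlinarith [Real.add_one_le_exp (1/2:ℝ), Real.exp_pos (-(1/2):ℝ)]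
  rcases le_or_gt 1 (x ^ 2) with hx | hx
  · have h1 : Real.cosh (x * v) * Real.exp (-(x ^ 2) / 2) ≤ Real.exp (v ^ 2 / 2) := by
      calc Real.cosh (x * v) * Real.exp (-(x ^ 2) / 2)
          ≤ Real.exp |x * v| * Real.exp (-(x ^ 2) / 2) := by
            gcongr; exact aux2 _
        _ = Real.exp (|x * v| + -(x ^ 2) / 2) := (Real.exp_add _ _).symm
        _ ≤ Real.exp (v ^ 2 / 2) := Real.exp_le_exp.2 (by linarith)
    have h2 : Real.exp (v ^ 2 / 2) ≤ Real.exp (v ^ 2) := Real.exp_le_exp.2 (by nlinarith)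
    have h3 : Real.exp (-(x ^ 2) / 2) ≤ Real.exp (-(1/2) : ℝ) :=
      Real.exp_le_exp.2 (by linarith)
    have h6 : 2 * Real.exp (v ^ 2) ≤ 6 * Real.exp (v ^ 2) * (1 - Real.exp (-(x ^ 2) / 2)) := by
      nlinarith
    nlinarith
  · have hle1 : Real.exp (-(x ^ 2) / 2) ≤ 1 := Real.exp_le_one_iff.2 (by nlinarith)
    have h2 : Real.exp |x * v| ≤ Real.exp (1/2:ℝ) * Real.exp (v ^ 2 / 2) := by
      rw [← Real.exp_add]
      exact Real.exp_le_exp.2 (by nlinarith)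
    have h3 : v ^ 2 / 2 ≤ Real.exp (v ^ 2 / 2) := by
      nlinarith [Real.add_one_le_exp (v ^ 2 / 2)]
    have h4 : (Real.cosh (x * v) - 1) * Real.exp (-(x ^ 2) / 2) ≤
        x ^ 2 * Real.exp (1/2:ℝ) * Real.exp (v ^ 2) := by
      calc (Real.cosh (x * v) - 1) * Real.exp (-(x ^ 2) / 2)
          ≤ (Real.cosh (x * v) - 1) * 1 := by gcongr <;> linarith
        _ = Real.cosh (x * v) - 1 := mul_one _
        _ ≤ (x * v) ^ 2 / 2 * Real.exp |x * v| := aux3 _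
        _ ≤ (x * v) ^ 2 / 2 * (Real.exp (1/2:ℝ) * Real.exp (v ^ 2 / 2)) := by
            gcongr
        _ = x ^ 2 * Real.exp (1/2:ℝ) * ((v ^ 2 / 2) * Real.exp (v ^ 2 / 2)) := by ring
        _ ≤ x ^ 2 * Real.exp (1/2:ℝ) * (Real.exp (v ^ 2 / 2) * Real.exp (v ^ 2 / 2)) := by
            gcongr
        _ = x ^ 2 * Real.exp (1/2:ℝ) * Real.exp (v ^ 2) := by rw [hvv]
    have h5 : x ^ 2 / 2 * Real.exp (-(1/2):ℝ) ≤ 1 - Real.exp (-(x ^ 2) / 2) := by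
      have a1 := aux1 (x ^ 2 / 2)
      have a2 : Real.exp (-(1/2):ℝ) ≤ Real.exp (-(x ^ 2 / 2)) :=
        Real.exp_le_exp.2 (by nlinarith)
      have heq : -(x ^ 2) / 2 = -(x ^ 2 / 2) := by ring
      rw [heq]
      nlinarith [sq_nonneg x]
    have h7 : Real.exp (1/2:ℝ) ≤ 3 * Real.exp (-(1/2):ℝ) := by
      nlinarith [auxe3, Real.exp_pos (-(1/2):ℝ), Real.exp_pos (1/2:ℝ),
        (by rw [← Real.exp_add]; norm_num : Real.exp (1/2:ℝ) * Real.exp (1/2:ℝ) = Real.exp 1),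
        (by rw [← Real.exp_add]; norm_num : Real.exp (1/2:ℝ) * Real.exp (-(1/2):ℝ) = 1)]
    calc (Real.cosh (x * v) - 1) * Real.exp (-(x ^ 2) / 2)
        ≤ x ^ 2 * Real.exp (1/2:ℝ) * Real.exp (v ^ 2) := h4
      _ ≤ x ^ 2 * (3 * Real.exp (-(1/2):ℝ)) * Real.exp (v ^ 2) := by gcongr
      _ = 6 * Real.exp (v ^ 2) * (x ^ 2 / 2 * Real.exp (-(1/2):ℝ)) := by ring
      _ ≤ 6 * Real.exp (v ^ 2) * (1 - Real.exp (-(x ^ 2) / 2)) := by gcongr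

/-- bound on the near-zero set. -/
lemma auxS (γ v x : ℝ) (hγ : 0 < γ) (hv : max 1 (γ ^ 2) ≤ v ^ 2) (hx : |x| < γ / |v|) :
    Real.cosh (x * v) * Real.exp (-(x ^ 2) / 2) - Real.exp (-(x ^ 2) / 2) ≤
      2 * Real.exp γ * v ^ 2 * (1 - Real.exp (-(x ^ 2) / 2)) := by
  have hv1 : (1:ℝ) ≤ v ^ 2 := le_trans (le_max_left _ _) hv
  have hvγ : γ ^ 2 ≤ v ^ 2 := le_trans (le_max_right _ _) hv
  have hvpos : 0 < |v| := by
    rw [abs_pos]; intro h; rw [h] at hv1; norm_num at hv1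
  have hγv : γ ≤ |v| := by
    nlinarith [sq_abs v, abs_nonneg v]
  have hxv : |x * v| ≤ γ := by
    rw [abs_mul]
    calc |x| * |v| ≤ (γ / |v|) * |v| := by gcongr
      _ = γ := by field_simp
  have hx1 : x ^ 2 ≤ 1 := by
    have h1 : |x| ≤ γ / |v| := hx.le
    have h2 : γ / |v| ≤ 1 := by
      rw [div_le_one hvpos]; exact hγv
    nlinarith [sq_abs x, abs_nonneg x]
  have hexpxv : Real.exp |x * v| ≤ Real.exp γ := Real.exp_le_exp.2 hxv
  have hep := Real.exp_pos (-(x ^ 2) / 2)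
  have hle1 : Real.exp (-(x ^ 2) / 2) ≤ 1 := Real.exp_le_one_iff.2 (by nlinarith)
  have h5 : x ^ 2 / 2 * Real.exp (-(1/2):ℝ) ≤ 1 - Real.exp (-(x ^ 2) / 2) := by
    have a1 := aux1 (x ^ 2 / 2)
    have a2 : Real.exp (-(1/2):ℝ) ≤ Real.exp (-(x ^ 2 / 2)) :=
      Real.exp_le_exp.2 (by nlinarith)
    have heq : -(x ^ 2) / 2 = -(x ^ 2 / 2) := by ring
    rw [heq]
    nlinarith [sq_nonneg x]
  have h6 : x ^ 2 ≤ 4 * (1 - Real.exp (-(x ^ 2) / 2)) := by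
    nlinarith [auxe']
  have h1 : Real.cosh (x * v) * Real.exp (-(x ^ 2) / 2) - Real.exp (-(x ^ 2) / 2)
      = (Real.cosh (x * v) - 1) * Real.exp (-(x ^ 2) / 2) := by ring
  rw [h1]
  have h2 : (Real.cosh (x * v) - 1) * Real.exp (-(x ^ 2) / 2) ≤
      x ^ 2 * v ^ 2 / 2 * Real.exp γ := by
    have hc1 := Real.one_le_cosh (x * v)
    calc (Real.cosh (x * v) - 1) * Real.exp (-(x ^ 2) / 2)
        ≤ (Real.cosh (x * v) - 1) * 1 := by gcongr <;> linarith
      _ = Real.cosh (x * v) - 1 := mul_one _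
      _ ≤ (x * v) ^ 2 / 2 * Real.exp |x * v| := aux3 _
      _ ≤ (x * v) ^ 2 / 2 * Real.exp γ := by gcongr
      _ = x ^ 2 * v ^ 2 / 2 * Real.exp γ := by ring
  calc (Real.cosh (x * v) - 1) * Real.exp (-(x ^ 2) / 2)
      ≤ x ^ 2 * v ^ 2 / 2 * Real.exp γ := h2
    _ ≤ (4 * (1 - Real.exp (-(x ^ 2) / 2))) * v ^ 2 / 2 * Real.exp γ := by
        gcongr
    _ = 2 * Real.exp γ * v ^ 2 * (1 - Real.exp (-(x ^ 2) / 2)) := by ring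

/-- bound off the near-zero set. -/
lemma auxSc (γ v x : ℝ) (hγ : 0 < γ) (hv : max 1 (γ ^ 2) ≤ v ^ 2) (hx : ¬ |x| < γ / |v|) :
    Real.exp (-(x ^ 2) / 2) ≤ 4 * v ^ 2 / γ ^ 2 * (1 - Real.exp (-(x ^ 2) / 2)) := by
  push_neg at hx
  have hv1 : (1:ℝ) ≤ v ^ 2 := le_trans (le_max_left _ _) hv
  have hvγ : γ ^ 2 ≤ v ^ 2 := le_trans (le_max_right _ _) hv
  have hvpos : 0 < |v| := by
    rw [abs_pos]; intro h; rw [h] at hv1; norm_num at hv1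
  have hx2 : γ ^ 2 / v ^ 2 ≤ x ^ 2 := by
    have h1 : γ / |v| ≤ |x| := hx
    have h2 : 0 ≤ γ / |v| := by positivity
    have h3 : (γ / |v|) ^ 2 ≤ |x| ^ 2 := by nlinarith [abs_nonneg x]
    calc γ ^ 2 / v ^ 2 = (γ / |v|) ^ 2 := by
          rw [div_pow, sq_abs]
      _ ≤ |x| ^ 2 := h3
      _ = x ^ 2 := sq_abs x
  set s₀ := γ ^ 2 / (2 * v ^ 2) with hs₀
  have hs₀pos : 0 < s₀ := by positivity
  have hs₀le : s₀ ≤ 1/2 := by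
    rw [hs₀, div_le_div_iff₀ (by positivity) (by norm_num)]
    nlinarith
  have hmono : Real.exp (-(x ^ 2) / 2) ≤ Real.exp (-s₀) := by
    apply Real.exp_le_exp.2
    have h : s₀ ≤ x ^ 2 / 2 := by
      rw [hs₀, show γ ^ 2 / (2 * v ^ 2) = (γ ^ 2 / v ^ 2) / 2 by ring]
      linarith
    linarith
  have key : s₀ / 2 ≤ 1 - Real.exp (-(x ^ 2) / 2) := by
    have a1 := aux1 s₀
    have a2 : Real.exp (-(1/2):ℝ) ≤ 1 := Real.exp_le_one_iff.2 (by norm_num)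
    have a3 : Real.exp (-s₀) ≥ Real.exp (-(1/2):ℝ) := Real.exp_le_exp.2 (by linarith)
    have a4 := auxe'
    nlinarith
  have hle1 : Real.exp (-(x ^ 2) / 2) ≤ 1 := Real.exp_le_one_iff.2 (by nlinarith)
  have hfin : 4 * v ^ 2 / γ ^ 2 * (s₀ / 2) = 1 := by
    rw [hs₀]; have hv0 : v ≠ 0 := abs_pos.mp hvpos; field_simp; norm_num
  calc Real.exp (-(x ^ 2) / 2) ≤ 1 := hle1
    _ = 4 * v ^ 2 / γ ^ 2 * (s₀ / 2) := hfin.symm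
    _ ≤ 4 * v ^ 2 / γ ^ 2 * (1 - Real.exp (-(x ^ 2) / 2)) := by
        gcongr

lemma aux5 (x v : ℝ) : Real.cosh (x * v) * Real.exp (-(x ^ 2) / 2) ≤ Real.exp (v ^ 2 / 2) := by
  have hxv : |x * v| ≤ x ^ 2 / 2 + v ^ 2 / 2 := by
    rw [abs_mul]
    nlinarith [sq_nonneg (|x| - |v|), sq_abs x, sq_abs v, abs_nonneg x, abs_nonneg v]
  calc Real.cosh (x * v) * Real.exp (-(x ^ 2) / 2)
      ≤ Real.exp |x * v| * Real.exp (-(x ^ 2) / 2) := by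
        gcongr
        exact aux2 _
    _ = Real.exp (|x * v| + -(x ^ 2) / 2) := (Real.exp_add _ _).symm
    _ ≤ Real.exp (v ^ 2 / 2) := Real.exp_le_exp.2 (by linarith)

lemma aux7p (x v : ℝ) : x * v - x ^ 2 / 2 ≤ v ^ 2 / 2 := by nlinarith [sq_nonneg (x - v)]

lemma aux7m (x v : ℝ) : -x * v - x ^ 2 / 2 ≤ v ^ 2 / 2 := by nlinarith [sq_nonneg (x + v)]

lemma phi_shift (v x : ℝ) : phi (v - x) = phi v * Real.exp (x * v - x ^ 2 / 2) := by
  unfold phi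
  rw [mul_assoc, ← Real.exp_add]
  congr 1
  ring

lemma integ_bdd {μ : Measure ℝ} [IsFiniteMeasure μ] {f : ℝ → ℝ} (hf : Continuous f) {C : ℝ}
    (h : ∀ x, |f x| ≤ C) : Integrable f μ :=
  (integrable_const C).mono' hf.aestronglyMeasurable
    (Eventually.of_forall (by simpa [Real.norm_eq_abs] using h))

set_option maxHeartbeats 1000000 in
/-- Theorem 2, sparse-limit threshold: if the symmetric family `(P_ν)` has a
sparse limit with exceedance measure `H` and rate `ρ(ν) → 0`, and `y(ν)` is chosen so that
`∫ (cosh(x y(ν)) - 1) e^{-x²/2} dP_ν(x) = ω` eventually and `ρ(ν) y(ν)² → 0`, then the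
conditional probability `P_ν(|X| < γ/|y| ∣ Y = y)` is asymptotically equivalent to the
complementary local activity rate `(1 - ρ(ν)) φ(y(ν)) / m_ν(y(ν))`. -/
theorem stmt18
    (P : ℝ → Measure ℝ)
    (hprob : ∀ ν : ℝ, 0 < ν → IsProbabilityMeasure (P ν))
    (hsymm : ∀ ν : ℝ, 0 < ν → Measure.map (fun x : ℝ => -x) (P ν) = P ν)
    (ρ : ℝ → ℝ) (hρdef : ∀ ν, ρ ν = ∫ x, (1 - Real.exp (-(x ^ 2) / 2)) ∂(P ν))
    (hρpos : ∀ ν : ℝ, 0 < ν → 0 < ρ ν)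
    (hρ0 : Tendsto ρ (nhdsWithin 0 (Set.Ioi 0)) (nhds 0))
    (H : Measure ℝ)
    (hH : (∫ x, (1 - Real.exp (-(x ^ 2) / 2)) ∂H) = 1)
    (hsparse : ∀ w : ℝ → ℝ, Continuous w → (∃ C, ∀ x, |w x| ≤ C) →
      (∃ C, ∀ x : ℝ, x ≠ 0 → |w x| ≤ C * x ^ 2) →
      Integrable w H ∧
        Tendsto (fun ν => (ρ ν)⁻¹ * ∫ x, w x ∂(P ν)) (nhdsWithin 0 (Set.Ioi 0))
          (nhds (∫ x, w x ∂H)))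
    (γ ω : ℝ) (hγ : 0 < γ) (hω : 0 < ω)
    (y : ℝ → ℝ)
    (hy : ∀ᶠ ν in nhdsWithin (0 : ℝ) (Set.Ioi 0),
      (∫ x, (Real.cosh (x * y ν) - 1) * Real.exp (-(x ^ 2) / 2) ∂(P ν)) = ω)
    (hyρ : Tendsto (fun ν => ρ ν * (y ν) ^ 2) (nhdsWithin 0 (Set.Ioi 0)) (nhds 0)) :
    Tendsto (fun ν =>
        (∫ x in {x : ℝ | |x| < γ / |y ν|}, phi (y ν - x) ∂(P ν)) /
          ((1 - ρ ν) * phi (y ν)))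
      (nhdsWithin 0 (Set.Ioi 0)) (nhds 1) := by
  have hpos : ∀ᶠ ν in nhdsWithin (0:ℝ) (Set.Ioi 0), 0 < ν := self_mem_nhdsWithin
  have hSmeas : ∀ c : ℝ, MeasurableSet {x : ℝ | |x| < c} :=
    fun c => (isOpen_lt continuous_abs continuous_const).measurableSet
  have hexp_cont : Continuous fun x : ℝ => Real.exp (-(x ^ 2) / 2) := by fun_prop
  have hexp_bdd : ∀ x : ℝ, |Real.exp (-(x ^ 2) / 2)| ≤ 1 := fun x => by
    rw [abs_of_pos (Real.exp_pos _)]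
    exact Real.exp_le_one_iff.2 (by nlinarith [sq_nonneg x])
  have hint_e : ∀ ν : ℝ, 0 < ν → Integrable (fun x => Real.exp (-(x ^ 2) / 2)) (P ν) := by
    intro ν hν
    haveI := hprob ν hν
    exact integ_bdd hexp_cont hexp_bdd
  have hint_one_sub : ∀ ν : ℝ, 0 < ν →
      Integrable (fun x : ℝ => 1 - Real.exp (-(x ^ 2) / 2)) (P ν) := by
    intro ν hν
    haveI := hprob ν hν
    exact (integrable_const 1).sub (hint_e ν hν)
  have hB : ∀ ν : ℝ, 0 < ν → (∫ x, Real.exp (-(x ^ 2) / 2) ∂(P ν)) = 1 - ρ ν := by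
    intro ν hν
    haveI := hprob ν hν
    have h := hρdef ν
    rw [integral_sub (integrable_const 1) (hint_e ν hν)] at h
    have h1 : (∫ (_ : ℝ), (1:ℝ) ∂(P ν)) = 1 := by simp
    rw [h1] at h
    linarith
  have hint_cosh : ∀ ν : ℝ, 0 < ν →
      Integrable (fun x => Real.cosh (x * y ν) * Real.exp (-(x ^ 2) / 2)) (P ν) := by
    intro ν hν
    haveI := hprob ν hν
    refine integ_bdd (by fun_prop) (C := Real.exp ((y ν) ^ 2 / 2)) ?_
    intro x
    rw [abs_of_pos (by positivity)]
    exact aux5 x (y ν)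
  have hint_gp : ∀ ν : ℝ, 0 < ν →
      Integrable (fun x => Real.exp (x * y ν - x ^ 2 / 2)) (P ν) := by
    intro ν hν
    haveI := hprob ν hν
    refine integ_bdd (by fun_prop) (C := Real.exp ((y ν) ^ 2 / 2)) ?_
    intro x
    rw [abs_of_pos (Real.exp_pos _)]
    exact Real.exp_le_exp.2 (aux7p x (y ν))
  have hint_gm : ∀ ν : ℝ, 0 < ν →
      Integrable (fun x => Real.exp (-x * y ν - x ^ 2 / 2)) (P ν) := by
    intro ν hν
    haveI := hprob ν hν
    refine integ_bdd (by fun_prop) (C := Real.exp ((y ν) ^ 2 / 2)) ?_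
    intro x
    rw [abs_of_pos (Real.exp_pos _)]
    exact Real.exp_le_exp.2 (aux7m x (y ν))
  -- Step 1: (y ν)² is eventually large
  have hyinf : ∀ᶠ ν in nhdsWithin (0:ℝ) (Set.Ioi 0), max 1 (γ ^ 2) ≤ (y ν) ^ 2 := by
    set M := max 1 (γ ^ 2) with hM
    have hMpos : (0:ℝ) < ω / (6 * Real.exp M) := by positivity
    have hev : ∀ᶠ ν in nhdsWithin (0:ℝ) (Set.Ioi 0), ρ ν < ω / (6 * Real.exp M) :=
      hρ0.eventually_lt_const hMpos
    filter_upwards [hy, hpos, hev] with ν hyν hν hρν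
    by_contra hlt
    push_neg at hlt
    have hρp := hρpos ν hν
    haveI := hprob ν hν
    have key : ω ≤ 6 * Real.exp ((y ν) ^ 2) * ρ ν := by
      have hintL : Integrable (fun x => (Real.cosh (x * y ν) - 1) * Real.exp (-(x ^ 2) / 2)) (P ν) := by
        have heq : (fun x => (Real.cosh (x * y ν) - 1) * Real.exp (-(x ^ 2) / 2))
            = fun x => Real.cosh (x * y ν) * Real.exp (-(x ^ 2) / 2) - Real.exp (-(x ^ 2) / 2) := by
          funext x; ring
        rw [heq]
        exact (hint_cosh ν hν).sub (hint_e ν hν)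
      have hintR : Integrable
          (fun x : ℝ => 6 * Real.exp ((y ν) ^ 2) * (1 - Real.exp (-(x ^ 2) / 2))) (P ν) :=
        (hint_one_sub ν hν).const_mul _
      calc ω = ∫ x, (Real.cosh (x * y ν) - 1) * Real.exp (-(x ^ 2) / 2) ∂(P ν) := hyν.symm
        _ ≤ ∫ x, 6 * Real.exp ((y ν) ^ 2) * (1 - Real.exp (-(x ^ 2) / 2)) ∂(P ν) :=
            integral_mono hintL hintR (fun x => aux4 x (y ν))
        _ = 6 * Real.exp ((y ν) ^ 2) * ∫ x, (1 - Real.exp (-(x ^ 2) / 2)) ∂(P ν) :=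
            integral_const_mul _ _
        _ = 6 * Real.exp ((y ν) ^ 2) * ρ ν := by rw [← hρdef ν]
    have hexp : Real.exp ((y ν) ^ 2) ≤ Real.exp M := Real.exp_le_exp.2 hlt.le
    have hub : ω ≤ 6 * Real.exp M * ρ ν := by nlinarith [Real.exp_pos M]
    rw [lt_div_iff₀ (by positivity)] at hρν
    linarith
  set F : ℝ → ℝ := fun ν =>
    ∫ x in {x : ℝ | |x| < γ / |y ν|}, Real.cosh (x * y ν) * Real.exp (-(x ^ 2) / 2) ∂(P ν)
    with hF
  -- Step 2: F - (1 - ρ) → 0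
  have hAB : Tendsto (fun ν => F ν - (1 - ρ ν)) (nhdsWithin (0:ℝ) (Set.Ioi 0)) (nhds 0) := by
    apply squeeze_zero_norm' (a := fun ν => (2 * Real.exp γ + 4 / γ ^ 2) * (ρ ν * (y ν) ^ 2))
    · filter_upwards [hpos, hyinf] with ν hν hbig
      haveI := hprob ν hν
      have hρp := hρpos ν hν
      set v := y ν with hv
      set S := {x : ℝ | |x| < γ / |v|} with hSdef
      have hS : MeasurableSet S := hSmeas _
      have hint_eS := hint_e ν hν
      have hFν : F ν = ∫ x in S, Real.cosh (x * v) * Real.exp (-(x ^ 2) / 2) ∂(P ν) := rfl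
      have hsplit : (∫ x, Real.exp (-(x ^ 2) / 2) ∂(P ν))
          = (∫ x in S, Real.exp (-(x ^ 2) / 2) ∂(P ν))
            + ∫ x in Sᶜ, Real.exp (-(x ^ 2) / 2) ∂(P ν) :=
        (integral_add_compl hS hint_eS).symm
      have hsub : (∫ x in S,
            (Real.cosh (x * v) * Real.exp (-(x ^ 2) / 2) - Real.exp (-(x ^ 2) / 2)) ∂(P ν))
          = F ν - ∫ x in S, Real.exp (-(x ^ 2) / 2) ∂(P ν) := by
        rw [integral_sub ((hint_cosh ν hν).integrableOn) hint_eS.integrableOn, hFν]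
      have hρ_e : (∫ x, (1 - Real.exp (-(x ^ 2) / 2)) ∂(P ν)) = ρ ν := (hρdef ν).symm
      have h1sub_nonneg : 0 ≤ᵐ[P ν] fun x : ℝ => 1 - Real.exp (-(x ^ 2) / 2) :=
        Eventually.of_forall fun x => by
          have h1 := hexp_bdd x
          have h2 := le_abs_self (Real.exp (-(x ^ 2) / 2))
          simp only [Pi.zero_apply]
          linarith
      have b1 : (∫ x in S,
            (Real.cosh (x * v) * Real.exp (-(x ^ 2) / 2) - Real.exp (-(x ^ 2) / 2)) ∂(P ν))
          ≤ 2 * Real.exp γ * v ^ 2 * ρ ν := by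
        calc (∫ x in S,
              (Real.cosh (x * v) * Real.exp (-(x ^ 2) / 2) - Real.exp (-(x ^ 2) / 2)) ∂(P ν))
            ≤ ∫ x in S, 2 * Real.exp γ * v ^ 2 * (1 - Real.exp (-(x ^ 2) / 2)) ∂(P ν) :=
              setIntegral_mono_on (((hint_cosh ν hν).sub hint_eS).integrableOn)
                (((hint_one_sub ν hν).const_mul _).integrableOn) hS
                (fun x hx => auxS γ v x hγ hbig hx)
          _ = 2 * Real.exp γ * v ^ 2 * ∫ x in S, (1 - Real.exp (-(x ^ 2) / 2)) ∂(P ν) :=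
              integral_const_mul _ _
          _ ≤ 2 * Real.exp γ * v ^ 2 * ∫ x, (1 - Real.exp (-(x ^ 2) / 2)) ∂(P ν) :=
              mul_le_mul_of_nonneg_left
                (setIntegral_le_integral (hint_one_sub ν hν) h1sub_nonneg) (by positivity)
          _ = 2 * Real.exp γ * v ^ 2 * ρ ν := by rw [hρ_e]
      have b1' : 0 ≤ ∫ x in S,
            (Real.cosh (x * v) * Real.exp (-(x ^ 2) / 2) - Real.exp (-(x ^ 2) / 2)) ∂(P ν) :=
        setIntegral_nonneg hS fun x _ => by
          nlinarith [Real.one_le_cosh (x * v), Real.exp_pos (-(x ^ 2) / 2)]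
      have b2 : (∫ x in Sᶜ, Real.exp (-(x ^ 2) / 2) ∂(P ν)) ≤ 4 * v ^ 2 / γ ^ 2 * ρ ν := by
        calc (∫ x in Sᶜ, Real.exp (-(x ^ 2) / 2) ∂(P ν))
            ≤ ∫ x in Sᶜ, 4 * v ^ 2 / γ ^ 2 * (1 - Real.exp (-(x ^ 2) / 2)) ∂(P ν) :=
              setIntegral_mono_on hint_eS.integrableOn
                (((hint_one_sub ν hν).const_mul _).integrableOn) hS.compl
                (fun x hx => auxSc γ v x hγ hbig hx)
          _ = 4 * v ^ 2 / γ ^ 2 * ∫ x in Sᶜ, (1 - Real.exp (-(x ^ 2) / 2)) ∂(P ν) :=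
              integral_const_mul _ _
          _ ≤ 4 * v ^ 2 / γ ^ 2 * ∫ x, (1 - Real.exp (-(x ^ 2) / 2)) ∂(P ν) :=
              mul_le_mul_of_nonneg_left
                (setIntegral_le_integral (hint_one_sub ν hν) h1sub_nonneg) (by positivity)
          _ = 4 * v ^ 2 / γ ^ 2 * ρ ν := by rw [hρ_e]
      have b2' : 0 ≤ ∫ x in Sᶜ, Real.exp (-(x ^ 2) / 2) ∂(P ν) :=
        setIntegral_nonneg hS.compl fun x _ => (Real.exp_pos _).le
      have hident : F ν - (1 - ρ ν)
          = (∫ x in S,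
              (Real.cosh (x * v) * Real.exp (-(x ^ 2) / 2) - Real.exp (-(x ^ 2) / 2)) ∂(P ν))
            - ∫ x in Sᶜ, Real.exp (-(x ^ 2) / 2) ∂(P ν) := by
        rw [← hB ν hν, hsplit, hsub]
        ring
      rw [hident, Real.norm_eq_abs, abs_le]
      have hKeq : (2 * Real.exp γ + 4 / γ ^ 2) * (ρ ν * v ^ 2)
          = 2 * Real.exp γ * v ^ 2 * ρ ν + 4 * v ^ 2 / γ ^ 2 * ρ ν := by ring
      have hnn1 : 0 ≤ 2 * Real.exp γ * v ^ 2 * ρ ν := by positivity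
      have hnn2 : 0 ≤ 4 * v ^ 2 / γ ^ 2 * ρ ν := by positivity
      constructor <;> linarith
    · have h := hyρ.const_mul (2 * Real.exp γ + 4 / γ ^ 2)
      simpa using h
  have h1ρ : Tendsto (fun ν => 1 - ρ ν) (nhdsWithin (0:ℝ) (Set.Ioi 0)) (nhds 1) := by
    have h := (tendsto_const_nhds (x := (1:ℝ)) (f := nhdsWithin (0:ℝ) (Set.Ioi 0))).sub hρ0
    simpa using h
  have hAtend : Tendsto F (nhdsWithin (0:ℝ) (Set.Ioi 0)) (nhds 1) := by
    have h := hAB.add h1ρ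
    simpa using h
  have hdiv : Tendsto (fun ν => F ν / (1 - ρ ν)) (nhdsWithin (0:ℝ) (Set.Ioi 0)) (nhds 1) := by
    have h := hAtend.div h1ρ one_ne_zero
    rw [div_one] at h; exact h
  apply hdiv.congr'
  filter_upwards [hpos, hyinf] with ν hν hbig
  haveI := hprob ν hν
  set v := y ν with hv
  set S := {x : ℝ | |x| < γ / |v|} with hSdef
  have hS : MeasurableSet S := hSmeas _
  have hφpos : 0 < phi v := by unfold phi; positivity
  have hmemS : ∀ x : ℝ, -x ∈ S ↔ x ∈ S := fun x => by simp [hSdef, abs_neg]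
  have hintp : Integrable (fun x => Real.exp (x * v - x ^ 2 / 2)) (P ν) := hint_gp ν hν
  have hintm : Integrable (fun x => Real.exp (-x * v - x ^ 2 / 2)) (P ν) := hint_gm ν hν
  have hmap : (∫ x in S, Real.exp (x * v - x ^ 2 / 2) ∂(P ν))
      = ∫ x in S, Real.exp (-x * v - x ^ 2 / 2) ∂(P ν) := by
    rw [← integral_indicator hS, ← integral_indicator hS]
    conv_lhs => rw [← hsymm ν hν]
    rw [integral_map measurable_neg.aemeasurable
      (((Continuous.stronglyMeasurable (by fun_prop)).indicator hS).aestronglyMeasurable)]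
    congr 1
    funext x
    by_cases hx : x ∈ S
    · rw [Set.indicator_of_mem ((hmemS x).2 hx), Set.indicator_of_mem hx]
      congr 1
      ring
    · rw [Set.indicator_of_notMem (fun h => hx ((hmemS x).1 h)),
        Set.indicator_of_notMem hx]
  have hFν : F ν = ∫ x in S, Real.cosh (x * v) * Real.exp (-(x ^ 2) / 2) ∂(P ν) := rfl
  have hcoshid : ∀ x : ℝ, Real.exp (x * v - x ^ 2 / 2) + Real.exp (-x * v - x ^ 2 / 2)
      = 2 * (Real.cosh (x * v) * Real.exp (-(x ^ 2) / 2)) := by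
    intro x
    rw [Real.cosh_eq, show x * v - x ^ 2 / 2 = x * v + -(x ^ 2) / 2 by ring,
      show -x * v - x ^ 2 / 2 = -(x * v) + -(x ^ 2) / 2 by ring, Real.exp_add, Real.exp_add]
    ring
  have hFeq : (∫ x in S, Real.exp (x * v - x ^ 2 / 2) ∂(P ν)) = F ν := by
    have h2 : (∫ x in S,
          (Real.exp (x * v - x ^ 2 / 2) + Real.exp (-x * v - x ^ 2 / 2)) ∂(P ν))
        = 2 * F ν := by
      rw [hFν]
      rw [show (fun x => Real.exp (x * v - x ^ 2 / 2) + Real.exp (-x * v - x ^ 2 / 2))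
          = fun x => 2 * (Real.cosh (x * v) * Real.exp (-(x ^ 2) / 2)) from funext hcoshid]
      exact integral_const_mul _ _
    have h3 : (∫ x in S,
          (Real.exp (x * v - x ^ 2 / 2) + Real.exp (-x * v - x ^ 2 / 2)) ∂(P ν))
        = (∫ x in S, Real.exp (x * v - x ^ 2 / 2) ∂(P ν))
          + ∫ x in S, Real.exp (-x * v - x ^ 2 / 2) ∂(P ν) :=
      integral_add hintp.integrableOn hintm.integrableOn
    linarith [hmap]
  have hnum : (∫ x in S, phi (v - x) ∂(P ν)) = phi v * F ν := by
    have hcg : (∫ x in S, phi (v - x) ∂(P ν))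
        = ∫ x in S, phi v * Real.exp (x * v - x ^ 2 / 2) ∂(P ν) :=
      integral_congr_ae (Eventually.of_forall fun x => phi_shift v x)
    rw [hcg, integral_const_mul, hFeq]
  rw [hnum, mul_comm (1 - ρ ν) (phi v), mul_div_mul_left _ _ (ne_of_gt hφpos)]
end
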